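/- arXiv:1707.08039 — 5 statements merged into one kernel-verified Lean document; each statement's English description precedes it below -/
import Mathlib

section
/- Let h : [0,1] → [0,1] be monotone non-decreasing and left-continuous, let α = h(0), and let β be the Lebesgue measure of the set {θ ∈ [0,1] : h(θ) ≥ θ}. Then 0 ≤ α ≤ β ≤ 1 and ∫_0^1 h(θ) dθ ≥ α²/2 + β − β²/2. -/
open MeasureTheory

open Set
open scoped ENNReal

lemma aux_swap (W : Set ℝ) (hW : MeasurableSet W) (hfin : volume W ≠ ⊤) :
    2 * ∫⁻ θ, W.indicator (fun _ => (1:ℝ≥0∞)) θ * volume (W ∩ Set.Iic θ)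
      = volume W * volume W := by
  set V : Set (ℝ × ℝ) := {p | p.1 ∈ W ∧ p.2 ∈ W ∧ p.2 ≤ p.1} with hV
  have hVmeas : MeasurableSet V := by
    apply ((hW.preimage measurable_fst).inter ((hW.preimage measurable_snd).inter
      (measurableSet_le measurable_snd measurable_fst)))
  set f : ℝ → ℝ → ℝ≥0∞ := fun θ z => V.indicator (fun _ => 1) (θ, z) with hf
  have hmeasIic : Measurable fun θ => volume (W ∩ Set.Iic θ) := by
    apply Monotone.measurable
    intro a b hab
    exact measure_mono (inter_subset_inter_right _ (Iic_subset_Iic.2 hab))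
  have hmeasIci : Measurable fun θ => volume (W ∩ Set.Ici θ) := by
    apply Antitone.measurable
    intro a b hab
    exact measure_mono (inter_subset_inter_right _ (Ici_subset_Ici.2 hab))
  have inner1 : ∀ θ, ∫⁻ z, f θ z = W.indicator (fun _ => (1:ℝ≥0∞)) θ * volume (W ∩ Set.Iic θ) := by
    intro θ
    by_cases hθ : θ ∈ W
    · have : ∀ z, f θ z = (W ∩ Set.Iic θ).indicator (fun _ => (1:ℝ≥0∞)) z := by
        intro z
        simp only [hf, hV, Set.indicator, Set.mem_setOf_eq, Set.mem_inter_iff, Set.mem_Iic]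
        by_cases h1 : z ∈ W <;> by_cases h2 : z ≤ θ <;> simp [hV, Set.mem_setOf_eq, hθ, h1, h2]
      simp only [this]
      rw [lintegral_indicator (hW.inter measurableSet_Iic)]
      simp [hθ]
    · have : ∀ z, f θ z = 0 := by intro z; simp [hf, hV, Set.indicator, hθ]
      simp [this, hθ]
  have inner2 : ∀ z, ∫⁻ θ, f θ z = W.indicator (fun _ => (1:ℝ≥0∞)) z * volume (W ∩ Set.Ici z) := by
    intro z
    by_cases hz : z ∈ W
    · have : ∀ θ, f θ z = (W ∩ Set.Ici z).indicator (fun _ => (1:ℝ≥0∞)) θ := by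
        intro θ
        simp only [hf, hV, Set.indicator, Set.mem_setOf_eq, Set.mem_inter_iff, Set.mem_Ici]
        by_cases h1 : θ ∈ W <;> by_cases h2 : z ≤ θ <;> simp [hV, Set.mem_setOf_eq, hz, h1, h2]
      simp only [this]
      rw [lintegral_indicator (hW.inter measurableSet_Ici)]
      simp [hz]
    · have : ∀ θ, f θ z = 0 := by intro θ; simp [hf, hV, Set.indicator, hz]
      simp [this, hz]
  have hswap : ∫⁻ θ, ∫⁻ z, f θ z = ∫⁻ z, ∫⁻ θ, f θ z := by
    apply lintegral_lintegral_swap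
    have : Function.uncurry f = V.indicator (fun _ => (1:ℝ≥0∞)) := by
      funext p; simp [Function.uncurry, hf]
    rw [this]
    exact ((measurable_const.indicator hVmeas)).aemeasurable
  have hA : ∫⁻ θ, W.indicator (fun _ => (1:ℝ≥0∞)) θ * volume (W ∩ Set.Iic θ)
      = ∫⁻ z, W.indicator (fun _ => (1:ℝ≥0∞)) z * volume (W ∩ Set.Ici z) := by
    rw [← lintegral_congr inner1, hswap, lintegral_congr inner2]
  have hsum : (∫⁻ θ, W.indicator (fun _ => (1:ℝ≥0∞)) θ * volume (W ∩ Set.Iic θ))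
      + (∫⁻ θ, W.indicator (fun _ => (1:ℝ≥0∞)) θ * volume (W ∩ Set.Ici θ))
      = volume W * volume W := by
    rw [← lintegral_add_left (f := fun θ => W.indicator (fun _ => (1:ℝ≥0∞)) θ * volume (W ∩ Set.Iic θ))
      ((measurable_const.indicator hW).mul hmeasIic)]
    have : ∀ θ, W.indicator (fun _ => (1:ℝ≥0∞)) θ * volume (W ∩ Set.Iic θ)
        + W.indicator (fun _ => (1:ℝ≥0∞)) θ * volume (W ∩ Set.Ici θ)
        = W.indicator (fun _ => (1:ℝ≥0∞)) θ * volume W := by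
      intro θ
      rw [← mul_add]
      congr 1
      have hu : (W ∩ Set.Iic θ) ∪ (W ∩ Set.Ici θ) = W := by
        rw [← inter_union_distrib_left, Iic_union_Ici, inter_univ]
      have hi : volume ((W ∩ Set.Iic θ) ∩ (W ∩ Set.Ici θ)) = 0 := by
        apply le_antisymm _ zero_le
        calc volume ((W ∩ Set.Iic θ) ∩ (W ∩ Set.Ici θ)) ≤ volume ({θ} : Set ℝ) := by
              apply measure_mono
              rintro x ⟨⟨-, hx1⟩, -, hx2⟩
              simpa using le_antisymm hx1 hx2
          _ = 0 := by simp
      have := measure_union_add_inter (μ := volume) (t := W ∩ Set.Ici θ) (W ∩ Set.Iic θ)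
        (hW.inter measurableSet_Ici)
      rw [hu, hi, add_zero] at this
      exact this.symm
    simp only [this]
    rw [lintegral_mul_const' _ _ hfin, lintegral_indicator hW]
    simp
  rw [two_mul]
  nth_rewrite 2 [hA]
  exact hsum

/-- Let `h : [0,1] → [0,1]` be monotone non-decreasing and
left-continuous, `α = h(0)`, and `β` the Lebesgue measure of `{θ ∈ [0,1] : h(θ) ≥ θ}`.
Then `0 ≤ α ≤ β ≤ 1` and `∫_0^1 h ≥ α²/2 + β − β²/2`. -/
theorem monotone_left_continuous_integral_lower_bound
    (h : ℝ → ℝ)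
    (hmap : ∀ θ ∈ Set.Icc (0 : ℝ) 1, h θ ∈ Set.Icc (0 : ℝ) 1)
    (hmono : MonotoneOn h (Set.Icc 0 1))
    (hlc : ∀ θ ∈ Set.Ioc (0 : ℝ) 1, ContinuousWithinAt h (Set.Iio θ) θ)
    (α β : ℝ)
    (hα : α = h 0)
    (hβ : β = (volume {θ ∈ Set.Icc (0 : ℝ) 1 | θ ≤ h θ}).toReal) :
    0 ≤ α ∧ α ≤ β ∧ β ≤ 1 ∧ α ^ 2 / 2 + β - β ^ 2 / 2 ≤ ∫ θ in (0 : ℝ)..1, h θ := by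
  have h01 : (0:ℝ) ∈ Set.Icc (0:ℝ) 1 := by constructor <;> norm_num
  have hα01 : α ∈ Set.Icc (0:ℝ) 1 := hα ▸ hmap 0 h01
  have hα0 : 0 ≤ α := hα01.1
  have hα1 : α ≤ 1 := hα01.2
  -- h is bounded below by α on [0,1]
  have hge_α : ∀ θ ∈ Set.Icc (0:ℝ) 1, α ≤ h θ := by
    intro θ hθ; rw [hα]; exact hmono h01 hθ hθ.1
  set S : Set ℝ := {θ ∈ Set.Icc (0 : ℝ) 1 | θ ≤ h θ} with hS
  have hSsub : S ⊆ Set.Icc 0 1 := fun θ hθ => hθ.1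
  -- measurability of S via a monotone extension of h
  set h' : ℝ → ℝ := fun θ => h (max 0 (min θ 1)) with hh'
  have hclamp : ∀ θ, max 0 (min θ 1) ∈ Set.Icc (0:ℝ) 1 :=
    fun θ => ⟨le_max_left _ _, max_le zero_le_one (min_le_right _ _)⟩
  have hh'mono : Monotone h' := by
    intro x y hxy
    exact hmono (hclamp x) (hclamp y)
      (max_le_max le_rfl (min_le_min_right _ hxy))
  have hSeq : S = Set.Icc (0:ℝ) 1 ∩ {θ | θ ≤ h' θ} := by
    ext θ
    constructor
    · rintro ⟨hθ, hle⟩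
      refine ⟨hθ, ?_⟩
      have : max 0 (min θ 1) = θ := by
        rw [min_eq_left hθ.2, max_eq_right hθ.1]
      simpa [hh', this] using hle
    · rintro ⟨hθ, hle⟩
      have : max 0 (min θ 1) = θ := by
        rw [min_eq_left hθ.2, max_eq_right hθ.1]
      exact ⟨hθ, by simpa [hh', this] using hle⟩
  have hSmeas : MeasurableSet S := by
    rw [hSeq]
    exact measurableSet_Icc.inter (measurableSet_le measurable_id hh'mono.measurable)
  have hSfin : volume S ≠ ⊤ := by
    intro hcon
    have := measure_mono hSsub (μ := volume)
    rw [hcon, Real.volume_Icc] at this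
    simp at this
  have hvolIcc : volume (Set.Icc (0:ℝ) 1) = 1 := by rw [Real.volume_Icc]; norm_num
  have hSle1 : volume S ≤ 1 := hvolIcc ▸ measure_mono hSsub
  -- the three easy bounds
  have hβ1 : β ≤ 1 := by
    rw [hβ]
    calc (volume S).toReal ≤ (1:ℝ≥0∞).toReal := ENNReal.toReal_mono ENNReal.one_ne_top hSle1
      _ = 1 := by simp
  have hIccαS : Set.Icc 0 α ⊆ S := by
    intro θ hθ
    have hθ01 : θ ∈ Set.Icc (0:ℝ) 1 := ⟨hθ.1, le_trans hθ.2 hα1⟩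
    exact ⟨hθ01, le_trans hθ.2 (hge_α θ hθ01)⟩
  have hαβ : α ≤ β := by
    have := measure_mono hIccαS (μ := volume)
    rw [Real.volume_Icc] at this
    have h2 := ENNReal.toReal_mono hSfin this
    rw [ENNReal.toReal_ofReal (by linarith : (0:ℝ) ≤ α - 0)] at h2
    rw [hβ]; linarith
  have hβ0 : 0 ≤ β := le_trans hα0 hαβ
  refine ⟨hα0, hαβ, hβ1, ?_⟩
  -- main work
  set W : Set ℝ := Set.Icc (0:ℝ) 1 \ S with hW
  have hWmeas : MeasurableSet W := measurableSet_Icc.diff hSmeas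
  have hWsub : W ⊆ Set.Icc 0 1 := diff_subset
  have hWfin : volume W ≠ ⊤ := by
    intro hcon
    have := measure_mono hWsub (μ := volume)
    rw [hcon, hvolIcc] at this
    simp at this
  have hWvol : (volume W).toReal = 1 - β := by
    rw [hW, measure_diff hSsub hSmeas.nullMeasurableSet hSfin,
      ENNReal.toReal_sub_of_le (hvolIcc ▸ measure_mono (μ := volume) hSsub) (by rw [hvolIcc]; exact ENNReal.one_ne_top),
      hvolIcc, hβ]
    simp
  set M : ℝ → ℝ := fun θ => sSup (insert 0 (S ∩ Set.Icc 0 θ)) with hM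
  have hMbdd : ∀ θ : ℝ, BddAbove (insert 0 (S ∩ Set.Icc 0 θ)) := by
    intro θ
    refine ⟨max 0 θ, ?_⟩
    rintro x (rfl | hx)
    · exact le_max_left _ _
    · exact le_trans hx.2.2 (le_max_right _ _)
  have hMne : ∀ θ : ℝ, (insert 0 (S ∩ Set.Icc 0 θ)).Nonempty := fun θ => ⟨0, mem_insert _ _⟩
  have hMmono : Monotone M := by
    intro x y hxy
    exact csSup_le_csSup (hMbdd y) (hMne x)
      (insert_subset_insert (inter_subset_inter_right _ (Set.Icc_subset_Icc_right hxy)))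
  have hM0 : ∀ θ, 0 ≤ M θ := fun θ => le_csSup (hMbdd θ) (mem_insert _ _)
  have hMle : ∀ θ, 0 ≤ θ → M θ ≤ θ := by
    intro θ hθ
    apply csSup_le (hMne θ)
    rintro x (rfl | hx)
    · exact hθ
    · exact hx.2.2
  have hMS : ∀ θ ∈ S, M θ = θ := by
    intro θ hθ
    refine le_antisymm (hMle θ hθ.1.1) ?_
    exact le_csSup (hMbdd θ) (Or.inr ⟨hθ, hθ.1.1, le_rfl⟩)
  -- L ≤ h on [0,1]
  set L : ℝ → ℝ := fun θ => max α (M θ) with hL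
  have hLmono : Monotone L := fun x y hxy => max_le_max le_rfl (hMmono hxy)
  have hLleh : ∀ θ ∈ Set.Icc (0:ℝ) 1, L θ ≤ h θ := by
    intro θ hθ
    apply max_le (hge_α θ hθ)
    apply csSup_le (hMne θ)
    rintro x (rfl | hx)
    · exact (hmap θ hθ).1
    · exact le_trans hx.1.2 (hmono (hSsub hx.1) hθ hx.2.2)
  set c : ℝ → ℝ := fun θ => (volume (W ∩ Set.Iic θ)).toReal with hc
  have hcfin : ∀ θ, volume (W ∩ Set.Iic θ) ≠ ⊤ := by
    intro θ hcon
    exact hWfin (top_le_iff.1 (hcon ▸ measure_mono inter_subset_left))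
  have hcmono : Monotone c := by
    intro x y hxy
    exact ENNReal.toReal_mono (hcfin y)
      (measure_mono (inter_subset_inter_right _ (Iic_subset_Iic.2 hxy)))
  have hc0 : ∀ θ, 0 ≤ c θ := fun θ => ENNReal.toReal_nonneg
  have hc1 : ∀ θ, c θ ≤ 1 := by
    intro θ
    have : volume (W ∩ Set.Iic θ) ≤ 1 :=
      le_trans (measure_mono inter_subset_left) (hvolIcc ▸ measure_mono hWsub)
    calc c θ ≤ (1:ℝ≥0∞).toReal := ENNReal.toReal_mono ENNReal.one_ne_top this
      _ = 1 := by simp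
  -- Claim A : on W, θ - M θ ≤ c θ
  have claimA : ∀ θ ∈ W, θ - M θ ≤ c θ := by
    intro θ hθ
    have hsub : Set.Ioo (M θ) θ ⊆ W ∩ Set.Iic θ := by
      rintro x ⟨hx1, hx2⟩
      have hx01 : x ∈ Set.Icc (0:ℝ) 1 :=
        ⟨le_trans (hM0 θ) hx1.le, le_trans hx2.le (hWsub hθ).2⟩
      refine ⟨⟨hx01, ?_⟩, hx2.le⟩
      intro hxS
      exact absurd (le_csSup (hMbdd θ) (Or.inr ⟨hxS, hx01.1, hx2.le⟩)) (not_le.2 hx1)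
    have := measure_mono hsub (μ := volume)
    rw [Real.volume_Ioo] at this
    rcases le_or_gt (θ - M θ) 0 with hneg | hpos
    · exact le_trans hneg (hc0 θ)
    · have h2 := ENNReal.toReal_mono (hcfin θ) this
      rwa [ENNReal.toReal_ofReal hpos.le] at h2
  
  -- pointwise key inequality on [0,1]
  have key : ∀ θ ∈ Set.Icc (0:ℝ) 1,
      min (max α θ) β + max (θ - β) 0 ≤ L θ + W.indicator c θ := by
    intro θ hθ
    by_cases hθS : θ ∈ S
    · have hLθ : L θ = max α θ := by rw [hL]; simp only [hMS θ hθS]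
      have hind : 0 ≤ W.indicator c θ := Set.indicator_nonneg (fun x _ => hc0 x) θ
      rcases le_total θ β with hcase | hcase
      · have h3 : max (θ - β) 0 = 0 := max_eq_right (by linarith)
        rw [h3, add_zero]
        calc min (max α θ) β ≤ max α θ := min_le_left _ _
          _ ≤ L θ + W.indicator c θ := by rw [hLθ]; linarith
      · have hαθ : α ≤ θ := le_trans hαβ hcase
        have h1 : max α θ = θ := max_eq_right hαθ
        have h2 : min (max α θ) β = β := by rw [h1]; exact min_eq_right hcase
        have h3 : max (θ - β) 0 = θ - β := max_eq_left (by linarith)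
        rw [h2, h3, hLθ, h1]
        linarith
    · have hθW : θ ∈ W := ⟨hθ, hθS⟩
      have hαθ : α ≤ θ := by
        by_contra hcon
        push_neg at hcon
        exact hθS (hIccαS ⟨hθ.1, hcon.le⟩)
      have hind : W.indicator c θ = c θ := Set.indicator_of_mem hθW c
      have hclA := claimA θ hθW
      have h1 : max α θ = θ := max_eq_right hαθ
      have hLge : M θ ≤ L θ := le_max_right _ _
      rcases le_total θ β with hcase | hcase
      · have h3 : max (θ - β) 0 = 0 := max_eq_right (by linarith)
        have h2 : min (max α θ) β = θ := by rw [h1]; exact min_eq_left hcase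
        rw [h2, h3, hind, add_zero]
        linarith
      · have h2 : min (max α θ) β = β := by rw [h1]; exact min_eq_right hcase
        have h3 : max (θ - β) 0 = θ - β := max_eq_left (by linarith)
        rw [h2, h3, hind]
        linarith
  -- integrabilities
  have hint_h : IntervalIntegrable h volume 0 1 := by
    apply MonotoneOn.intervalIntegrable
    rwa [Set.uIcc_of_le zero_le_one]
  have hint_L : IntervalIntegrable L volume 0 1 :=
    (hLmono.monotoneOn _).intervalIntegrable
  have hint_ind : IntervalIntegrable (W.indicator c) volume 0 1 := by
    rw [intervalIntegrable_iff_integrableOn_Ioc_of_le zero_le_one]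
    constructor
    · exact ((hcmono.measurable).indicator hWmeas).aestronglyMeasurable.restrict
    · apply HasFiniteIntegral.restrict_of_bounded (C := 1)
      · rw [Real.volume_Ioc]
        exact ENNReal.ofReal_lt_top
      · apply ae_of_all
        intro x
        rw [Real.norm_eq_abs, abs_le]
        constructor
        · have := Set.indicator_nonneg (fun y (_ : y ∈ W) => hc0 y) x
          linarith
        · by_cases hx : x ∈ W
          · rw [Set.indicator_of_mem hx]; exact hc1 x
          · rw [Set.indicator_of_notMem hx]; norm_num
  have hint_g : IntervalIntegrable (fun θ => min (max α θ) β) volume 0 1 :=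
    (((continuous_const.max continuous_id).min continuous_const)).intervalIntegrable _ _
  have hint_m : IntervalIntegrable (fun θ => max (θ - β) 0) volume 0 1 :=
    (((continuous_id.sub continuous_const).max continuous_const)).intervalIntegrable _ _
  -- integral of g
  have hIg : (∫ θ in (0:ℝ)..1, min (max α θ) β) = α^2/2 + β - β^2/2 := by
    have c1 : (∫ θ in (0:ℝ)..α, min (max α θ) β) = α * α := by
      have he : Set.EqOn (fun θ => min (max α θ) β) (fun _ => α) (Set.uIcc 0 α) := by
        intro x hx
        rw [Set.uIcc_of_le hα0] at hx
        simp only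
        rw [max_eq_left hx.2, min_eq_left hαβ]
      rw [intervalIntegral.integral_congr he, intervalIntegral.integral_const]
      simp [smul_eq_mul]
    have c2 : (∫ θ in α..β, min (max α θ) β) = (β^2 - α^2)/2 := by
      have he : Set.EqOn (fun θ => min (max α θ) β) (fun x => x) (Set.uIcc α β) := by
        intro x hx
        rw [Set.uIcc_of_le hαβ] at hx
        simp only
        rw [max_eq_right hx.1, min_eq_left hx.2]
      rw [intervalIntegral.integral_congr he, integral_id]
    have c3 : (∫ θ in β..1, min (max α θ) β) = (1 - β) * β := by
      have he : Set.EqOn (fun θ => min (max α θ) β) (fun _ => β) (Set.uIcc β 1) := by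
        intro x hx
        rw [Set.uIcc_of_le hβ1] at hx
        simp only
        rw [max_eq_right (le_trans hαβ hx.1), min_eq_right hx.1]
      rw [intervalIntegral.integral_congr he, intervalIntegral.integral_const]
      simp [smul_eq_mul]
    have i1 : IntervalIntegrable (fun θ => min (max α θ) β) volume 0 α :=
      (((continuous_const.max continuous_id).min continuous_const)).intervalIntegrable _ _
    have i2 : IntervalIntegrable (fun θ => min (max α θ) β) volume α β :=
      (((continuous_const.max continuous_id).min continuous_const)).intervalIntegrable _ _
    have i3 : IntervalIntegrable (fun θ => min (max α θ) β) volume β 1 :=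
      (((continuous_const.max continuous_id).min continuous_const)).intervalIntegrable _ _
    have s1 := intervalIntegral.integral_add_adjacent_intervals i1 i2
    have s2 := intervalIntegral.integral_add_adjacent_intervals (i1.trans i2) i3
    rw [← s2, ← s1, c1, c2, c3]
    ring
  -- integral of max (θ - β) 0
  have hIm : (∫ θ in (0:ℝ)..1, max (θ - β) 0) = (1-β)^2/2 := by
    have c1 : (∫ θ in (0:ℝ)..β, max (θ - β) 0) = 0 := by
      have he : Set.EqOn (fun θ => max (θ - β) 0) (fun _ => (0:ℝ)) (Set.uIcc 0 β) := by
        intro x hx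
        rw [Set.uIcc_of_le hβ0] at hx
        simp only
        exact max_eq_right (by linarith [hx.2])
      rw [intervalIntegral.integral_congr he, intervalIntegral.integral_const]
      simp
    have c2 : (∫ θ in β..1, max (θ - β) 0) = (1-β)^2/2 := by
      have he : Set.EqOn (fun θ => max (θ - β) 0) (fun x => x - β) (Set.uIcc β 1) := by
        intro x hx
        rw [Set.uIcc_of_le hβ1] at hx
        simp only
        exact max_eq_left (by linarith [hx.1])
      rw [intervalIntegral.integral_congr he,
        intervalIntegral.integral_sub (intervalIntegral.intervalIntegrable_id)
          (intervalIntegrable_const), integral_id, intervalIntegral.integral_const]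
      simp [smul_eq_mul]
      ring
    have i1 : IntervalIntegrable (fun θ => max (θ - β) 0) volume 0 β :=
      (((continuous_id.sub continuous_const).max continuous_const)).intervalIntegrable _ _
    have i2 : IntervalIntegrable (fun θ => max (θ - β) 0) volume β 1 :=
      (((continuous_id.sub continuous_const).max continuous_const)).intervalIntegrable _ _
    rw [← intervalIntegral.integral_add_adjacent_intervals i1 i2, c1, c2]
    ring
  -- Claim B
  have hIc : (∫ θ in (0:ℝ)..1, W.indicator c θ) ≤ (1-β)^2/2 := by
    rw [intervalIntegral.integral_of_le zero_le_one]
    have hnn : 0 ≤ᵐ[volume.restrict (Set.Ioc (0:ℝ) 1)] W.indicator c :=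
      ae_of_all _ (fun x => Set.indicator_nonneg (fun y _ => hc0 y) x)
    rw [MeasureTheory.integral_eq_lintegral_of_nonneg_ae hnn
      (((hcmono.measurable).indicator hWmeas).aestronglyMeasurable.restrict)]
    have heq : ∀ θ, ENNReal.ofReal (W.indicator c θ)
        = W.indicator (fun _ => (1:ℝ≥0∞)) θ * volume (W ∩ Set.Iic θ) := by
      intro θ
      by_cases hθ : θ ∈ W
      · rw [Set.indicator_of_mem hθ, Set.indicator_of_mem hθ, one_mul, hc,
          ENNReal.ofReal_toReal (hcfin θ)]
      · rw [Set.indicator_of_notMem hθ, Set.indicator_of_notMem hθ, zero_mul,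
          ENNReal.ofReal_zero]
    have h2A := aux_swap W hWmeas hWfin
    set A := ∫⁻ θ, W.indicator (fun _ => (1:ℝ≥0∞)) θ * volume (W ∩ Set.Iic θ) with hA2
    have hfinA : A ≠ ⊤ := by
      intro hcon
      have hne : volume W * volume W ≠ ⊤ := ENNReal.mul_ne_top hWfin hWfin
      apply hne
      rw [← h2A, hcon]
      exact ENNReal.mul_top (by norm_num)
    have hstep : (∫⁻ θ in Set.Ioc (0:ℝ) 1, ENNReal.ofReal (W.indicator c θ)).toReal
        ≤ A.toReal := by
      apply ENNReal.toReal_mono hfinA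
      calc (∫⁻ θ in Set.Ioc (0:ℝ) 1, ENNReal.ofReal (W.indicator c θ))
          ≤ ∫⁻ θ, ENNReal.ofReal (W.indicator c θ) := setLIntegral_le_lintegral _ _
        _ = A := lintegral_congr heq
    have hval : 2 * A.toReal = (1-β) * (1-β) := by
      calc 2 * A.toReal = ((2:ℝ≥0∞) * A).toReal := by
            rw [ENNReal.toReal_mul]; norm_num
        _ = (volume W * volume W).toReal := by rw [h2A]
        _ = (1-β) * (1-β) := by rw [ENNReal.toReal_mul, hWvol]
    nlinarith [hstep, hval]
  -- main comparison
  have hcomp : (∫ θ in (0:ℝ)..1, (min (max α θ) β + max (θ - β) 0))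
      ≤ ∫ θ in (0:ℝ)..1, (L θ + W.indicator c θ) := by
    exact intervalIntegral.integral_mono_on zero_le_one (hint_g.add hint_m)
      (hint_L.add hint_ind) key
  rw [intervalIntegral.integral_add hint_g hint_m,
    intervalIntegral.integral_add hint_L hint_ind, hIg, hIm] at hcomp
  have hLh : (∫ θ in (0:ℝ)..1, L θ) ≤ ∫ θ in (0:ℝ)..1, h θ :=
    intervalIntegral.integral_mono_on zero_le_one hint_L hint_h hLleh
  linarith [hIc, hLh, hcomp]
end

section
/- For every monotone non-decreasing, left-continuous function h : [0,1] → [0,1], one has h(0) + μ({θ ∈ [0,1] : h(θ) ≥ θ}) ≤ (1 + √2)·∫_0^1 h(θ) dθ, where μ denotes Lebesgue measure. Moreover this bound is tight: for α = √2 − 1 and h(θ) = max(α, θ), equality holds. -/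
open MeasureTheory Set
open scoped ENNReal

/-- Tonelli swap: integrating the measure of a set below θ over A equals
integrating the measure of A above u over B. -/
lemma swap_iic (A B : Set ℝ) (hB : MeasurableSet B) :
    ∫⁻ θ in A, volume (B ∩ Set.Iic θ) = ∫⁻ u in B, volume (A ∩ Set.Ici u) := by
  set E : Set (ℝ × ℝ) := {p : ℝ × ℝ | p.2 ∈ B ∧ p.2 ≤ p.1} with hE_def
  have hE : MeasurableSet E :=
    (hB.preimage measurable_snd).inter (measurableSet_le measurable_snd measurable_fst)
  have key : ∀ θ u : ℝ, E.indicator (1 : ℝ × ℝ → ℝ≥0∞) (θ, u)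
      = (B ∩ Set.Iic θ).indicator (1 : ℝ → ℝ≥0∞) u := by
    intro θ u
    by_cases h1 : u ∈ B <;> by_cases h2 : u ≤ θ <;>
      simp [Set.indicator_apply, hE_def, h1, h2]
  have inner : ∀ u : ℝ, (∫⁻ θ in A, E.indicator (1 : ℝ × ℝ → ℝ≥0∞) (θ, u))
      = B.indicator (fun u' => volume (A ∩ Set.Ici u')) u := by
    intro u
    by_cases hu : u ∈ B
    · have : ∀ θ : ℝ, E.indicator (1 : ℝ × ℝ → ℝ≥0∞) (θ, u)
          = (Set.Ici u).indicator (1 : ℝ → ℝ≥0∞) θ := by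
        intro θ
        by_cases h2 : u ≤ θ <;> simp [Set.indicator_apply, hE_def, hu, h2]
      simp_rw [this]
      rw [lintegral_indicator_one measurableSet_Ici, Set.indicator_of_mem hu,
        Measure.restrict_apply measurableSet_Ici, Set.inter_comm]
    · have : ∀ θ : ℝ, E.indicator (1 : ℝ × ℝ → ℝ≥0∞) (θ, u) = 0 := by
        intro θ
        simp [Set.indicator_apply, hE_def, hu]
      simp_rw [this]
      rw [lintegral_zero, Set.indicator_of_notMem hu]
  calc ∫⁻ θ in A, volume (B ∩ Set.Iic θ)
      = ∫⁻ θ in A, ∫⁻ u, E.indicator (1 : ℝ × ℝ → ℝ≥0∞) (θ, u) := by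
        refine lintegral_congr fun θ => ?_
        simp_rw [key θ]
        rw [lintegral_indicator_one (hB.inter measurableSet_Iic)]
    _ = ∫⁻ u, ∫⁻ θ in A, E.indicator (1 : ℝ × ℝ → ℝ≥0∞) (θ, u) := by
        refine lintegral_lintegral_swap ?_
        exact (measurable_one.indicator hE).aemeasurable
    _ = ∫⁻ u in B, volume (A ∩ Set.Ici u) := by
        simp_rw [inner]
        rw [lintegral_indicator hB]

/-- The scalar inequality behind the bound, case `a ≤ s`. -/
lemma scalar_ineq (a s r : ℝ) (h1 : 0 ≤ a) (has : a ≤ s) (hs1 : s ≤ 1)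
    (hr : r * r = 2) (hr1 : 1 ≤ r) :
    a + s ≤ (1 + r) * (s - s * s / 2 + a * a / 2) := by
  have hs0 : 0 ≤ s := h1.trans has
  by_cases hc : s ≤ 3 - 2 * r
  · have h43 : s ≤ r - 1 := by nlinarith
    nlinarith [mul_nonneg (sub_nonneg.2 has) (sub_nonneg.2 h43), sq_nonneg (s - r + 1),
      mul_nonneg hs0 (sub_nonneg.2 hs1), mul_nonneg (sub_nonneg.2 has) hs0]
  · push_neg at hc
    nlinarith [sq_nonneg (a - r + 1), mul_nonneg (sub_nonneg.2 hs1) (le_of_lt (sub_pos.2 hc))]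

/-- For every monotone non-decreasing, left-continuous
`h : [0,1] → [0,1]`, `h(0) + μ{θ ∈ [0,1] : h(θ) ≥ θ} ≤ (1 + √2)·∫_0^1 h`, and the bound is
tight: equality holds for `h(θ) = max(√2 − 1, θ)`. -/
theorem monotone_left_continuous_sqrt_two_bound :
    (∀ h : ℝ → ℝ,
      (∀ θ ∈ Set.Icc (0 : ℝ) 1, h θ ∈ Set.Icc (0 : ℝ) 1) →
      MonotoneOn h (Set.Icc 0 1) →
      (∀ θ ∈ Set.Ioc (0 : ℝ) 1, ContinuousWithinAt h (Set.Iio θ) θ) →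
      h 0 + (volume {θ ∈ Set.Icc (0 : ℝ) 1 | θ ≤ h θ}).toReal
        ≤ (1 + Real.sqrt 2) * ∫ θ in (0 : ℝ)..1, h θ) ∧
    ((fun θ : ℝ => max (Real.sqrt 2 - 1) θ) 0
        + (volume {θ ∈ Set.Icc (0 : ℝ) 1 | θ ≤ max (Real.sqrt 2 - 1) θ}).toReal
      = (1 + Real.sqrt 2) * ∫ θ in (0 : ℝ)..1, max (Real.sqrt 2 - 1) θ) := by
  have hr : Real.sqrt 2 * Real.sqrt 2 = 2 := Real.mul_self_sqrt (by norm_num)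
  have hrnn : 0 ≤ Real.sqrt 2 := Real.sqrt_nonneg 2
  have hr1 : 1 ≤ Real.sqrt 2 := by nlinarith
  have hr2 : Real.sqrt 2 ≤ 2 := by nlinarith
  set r := Real.sqrt 2 with hr_def
  constructor
  · -- main bound
    intro h hmem hmono _hcont
    have h0mem : (0 : ℝ) ∈ Set.Icc (0 : ℝ) 1 := ⟨le_refl 0, zero_le_one⟩
    set a := h 0 with ha_def
    have ha0 : 0 ≤ a := (hmem 0 h0mem).1
    have ha1 : a ≤ 1 := (hmem 0 h0mem).2
    set S := {θ ∈ Set.Icc (0 : ℝ) 1 | θ ≤ h θ} with hS_def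
    have hS_sub : S ⊆ Set.Icc (0 : ℝ) 1 := fun θ hθ => hθ.1
    -- measurability of S
    have hS_meas : MeasurableSet S := by
      have hproj : Monotone fun θ : ℝ => max 0 (min θ 1) :=
        fun x y hxy => max_le_max (le_refl 0) (min_le_min hxy (le_refl 1))
      have hprojmem : ∀ θ : ℝ, max 0 (min θ 1) ∈ Set.Icc (0 : ℝ) 1 :=
        fun θ => ⟨le_max_left _ _, max_le zero_le_one (min_le_right _ _)⟩
      have hmono' : Monotone fun θ : ℝ => h (max 0 (min θ 1)) :=
        fun x y hxy => hmono (hprojmem x) (hprojmem y) (hproj hxy)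
      have hS_eq : S = Set.Icc (0 : ℝ) 1 ∩ {θ : ℝ | θ ≤ h (max 0 (min θ 1))} := by
        ext θ
        constructor
        · rintro ⟨hθ, hle⟩
          refine ⟨hθ, ?_⟩
          have heq : max 0 (min θ 1) = θ := by
            rw [min_eq_left hθ.2, max_eq_right hθ.1]
          show θ ≤ h (max 0 (min θ 1))
          rw [heq]; exact hle
        · rintro ⟨hθ, hle⟩
          refine ⟨hθ, ?_⟩
          have heq : max 0 (min θ 1) = θ := by
            rw [min_eq_left hθ.2, max_eq_right hθ.1]
          have hle' : θ ≤ h (max 0 (min θ 1)) := hle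
          rwa [heq] at hle'
      rw [hS_eq]
      exact measurableSet_Icc.inter (measurableSet_le measurable_id hmono'.measurable)
    set v := volume S with hv_def
    have hv_le : v ≤ 1 := by
      have := measure_mono hS_sub (μ := volume)
      rwa [Real.volume_Icc, sub_zero, ENNReal.ofReal_one] at this
    have hv_fin : v ≠ ∞ := fun hcon => by simp [hcon] at hv_le
    set s := v.toReal with hs_def
    have hs0 : 0 ≤ s := ENNReal.toReal_nonneg
    have hs1 : s ≤ 1 := by
      have := ENNReal.toReal_mono ENNReal.one_ne_top hv_le
      simpa using this
    -- the cumulative function F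
    set F : ℝ → ℝ := fun θ => (volume (S ∩ Set.Iic θ)).toReal with hF_def
    have hSIic_fin : ∀ θ : ℝ, volume (S ∩ Set.Iic θ) ≠ ∞ := by
      intro θ hcon
      exact hv_fin (top_le_iff.mp
        (le_trans (le_of_eq hcon.symm) (measure_mono Set.inter_subset_left)))
    have hF_mono : Monotone F := by
      intro x y hxy
      exact ENNReal.toReal_mono (hSIic_fin y)
        (measure_mono (Set.inter_subset_inter_right _ (Set.Iic_subset_Iic.2 hxy)))
    have hF_meas : Measurable F := hF_mono.measurable
    have hF_nonneg : ∀ θ, 0 ≤ F θ := fun θ => ENNReal.toReal_nonneg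
    have hF_le_s : ∀ θ, F θ ≤ s := fun θ =>
      ENNReal.toReal_mono hv_fin (measure_mono Set.inter_subset_left)
    have hF_le : ∀ θ : ℝ, 0 ≤ θ → F θ ≤ θ := by
      intro θ hθ
      have hsub : S ∩ Set.Iic θ ⊆ Set.Icc 0 θ := fun u hu => ⟨(hS_sub hu.1).1, hu.2⟩
      have h1 : volume (S ∩ Set.Iic θ) ≤ ENNReal.ofReal θ := by
        have := measure_mono (μ := volume) hsub
        rwa [Real.volume_Icc, sub_zero] at this
      have := ENNReal.toReal_mono ENNReal.ofReal_ne_top h1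
      rwa [ENNReal.toReal_ofReal hθ] at this
    have hF_le_h : ∀ θ ∈ Set.Icc (0 : ℝ) 1, F θ ≤ h θ := by
      intro θ hθ
      have hhθ : 0 ≤ h θ := (hmem θ hθ).1
      have hsub : S ∩ Set.Iic θ ⊆ Set.Icc 0 (h θ) := by
        rintro u ⟨⟨hu1, hu2⟩, hu3⟩
        exact ⟨hu1.1, hu2.trans (hmono hu1 hθ hu3)⟩
      have h1 : volume (S ∩ Set.Iic θ) ≤ ENNReal.ofReal (h θ) := by
        have := measure_mono (μ := volume) hsub
        rwa [Real.volume_Icc, sub_zero] at this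
      have := ENNReal.toReal_mono ENNReal.ofReal_ne_top h1
      rwa [ENNReal.toReal_ofReal hhθ] at this
    -- the minorant ψ
    set ψ : ℝ → ℝ := fun θ => if θ ∈ S then θ else F θ with hψ_def
    have hψ_meas : Measurable ψ := Measurable.ite hS_meas measurable_id hF_meas
    have hψ_nonneg : ∀ θ ∈ Set.Icc (0 : ℝ) 1, 0 ≤ ψ θ := by
      intro θ hθ
      by_cases hθS : θ ∈ S <;> simp only [hψ_def, hθS, if_true, if_false]
      · exact hθ.1
      · exact hF_nonneg θ
    have hψ_le_one : ∀ θ ∈ Set.Icc (0 : ℝ) 1, ψ θ ≤ 1 := by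
      intro θ hθ
      by_cases hθS : θ ∈ S <;> simp only [hψ_def, hθS, if_true, if_false]
      · exact hθ.2
      · exact (hF_le_s θ).trans hs1
    -- pointwise bound
    have hpt : ∀ θ ∈ Set.Icc (0 : ℝ) 1, ψ θ + max (a - θ) 0 ≤ h θ := by
      intro θ hθ
      have hah : a ≤ h θ := hmono h0mem hθ hθ.1
      by_cases hθS : θ ∈ S <;> simp only [hψ_def, hθS, if_true, if_false]
      · rcases le_total a θ with hc | hc
        · rw [max_eq_right (by linarith)]
          simpa using hθS.2
        · rw [max_eq_left (by linarith)]
          linarith [hθS.2]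
      · rcases le_total a θ with hc | hc
        · rw [max_eq_right (by linarith)]
          simpa using hF_le_h θ hθ
        · rw [max_eq_left (by linarith)]
          have := hF_le θ hθ.1
          linarith
    -- integrability
    have hInt_h : IntervalIntegrable h volume 0 1 := by
      apply MonotoneOn.intervalIntegrable
      rwa [Set.uIcc_of_le zero_le_one]
    have hInt_ψ : IntervalIntegrable ψ volume 0 1 := by
      rw [intervalIntegrable_iff_integrableOn_Ioc_of_le zero_le_one]
      refine Integrable.mono' (integrable_const 1) hψ_meas.aestronglyMeasurable ?_
      refine (ae_restrict_iff' measurableSet_Ioc).2 (Filter.Eventually.of_forall ?_)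
      intro θ hθ
      have hθ' : θ ∈ Set.Icc (0 : ℝ) 1 := ⟨le_of_lt hθ.1, hθ.2⟩
      rw [Real.norm_eq_abs, abs_le]
      exact ⟨by linarith [hψ_nonneg θ hθ'], hψ_le_one θ hθ'⟩
    have hInt_max : IntervalIntegrable (fun θ => max (a - θ) 0) volume 0 1 :=
      (((continuous_const.sub continuous_id).max continuous_const)).intervalIntegrable _ _
    -- value of ∫ max (a - θ) 0
    have hmax_val : ∫ θ in (0 : ℝ)..1, max (a - θ) 0 = a * a / 2 := by
      have i1 : IntervalIntegrable (fun θ => max (a - θ) 0) volume 0 a :=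
        (((continuous_const.sub continuous_id).max continuous_const)).intervalIntegrable _ _
      have i2 : IntervalIntegrable (fun θ => max (a - θ) 0) volume a 1 :=
        (((continuous_const.sub continuous_id).max continuous_const)).intervalIntegrable _ _
      rw [← intervalIntegral.integral_add_adjacent_intervals i1 i2]
      have e1 : ∫ θ in (0 : ℝ)..a, max (a - θ) 0 = ∫ θ in (0 : ℝ)..a, (a - θ) := by
        apply intervalIntegral.integral_congr
        intro θ hθ
        rw [Set.uIcc_of_le ha0] at hθ
        exact max_eq_left (by linarith [hθ.2])
      have e2 : ∫ θ in a..(1 : ℝ), max (a - θ) 0 = ∫ θ in a..(1 : ℝ), (0 : ℝ) := by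
        apply intervalIntegral.integral_congr
        intro θ hθ
        rw [Set.uIcc_of_le ha1] at hθ
        exact max_eq_right (by linarith [hθ.1])
      rw [e1, e2, intervalIntegral.integral_zero,
        intervalIntegral.integral_sub intervalIntegrable_const
        intervalIntegral.intervalIntegrable_id, intervalIntegral.integral_const,
        integral_id, smul_eq_mul]
      ring
    -- the key lintegral identity
    have hSIic_ofReal : ∀ θ : ℝ, ENNReal.ofReal (F θ) = volume (S ∩ Set.Iic θ) :=
      fun θ => ENNReal.ofReal_toReal (hSIic_fin θ)
    set A2 := ∫⁻ θ in S, volume (S ∩ Set.Iic θ) with hA2_def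
    have hA2_half : A2 = v * v / 2 := by
      have hswap : A2 = ∫⁻ u in S, volume (S ∩ Set.Ici u) := swap_iic S S hS_meas
      have hmeas1 : Measurable fun θ : ℝ => volume (S ∩ Set.Iic θ) := by
        have : Monotone fun θ : ℝ => volume (S ∩ Set.Iic θ) := fun x y hxy =>
          measure_mono (Set.inter_subset_inter_right _ (Set.Iic_subset_Iic.2 hxy))
        exact this.measurable
      have hsum : A2 + A2 = v * v := by
        nth_rewrite 2 [hswap]
        rw [← lintegral_add_left hmeas1]
        have : ∀ θ ∈ S, volume (S ∩ Set.Iic θ) + volume (S ∩ Set.Ici θ) = v := by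
          intro θ hθ
          have hunion : (S ∩ Set.Iic θ) ∪ (S ∩ Set.Ici θ) = S := by
            rw [← Set.inter_union_distrib_left, Set.Iic_union_Ici, Set.inter_univ]
          have hinter : (S ∩ Set.Iic θ) ∩ (S ∩ Set.Ici θ) = S ∩ Set.Icc θ θ := by
            rw [Set.Icc_self]
            ext u
            simp only [Set.mem_inter_iff, Set.mem_Iic, Set.mem_Ici, Set.mem_singleton_iff]
            constructor
            · rintro ⟨⟨hu1, hu2⟩, _, hu3⟩; exact ⟨hu1, le_antisymm hu2 hu3⟩
            · rintro ⟨hu1, hu2⟩; exact ⟨⟨hu1, le_of_eq hu2⟩, hu1, ge_of_eq hu2⟩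
          have hz : volume ((S ∩ Set.Iic θ) ∩ (S ∩ Set.Ici θ)) = 0 := by
            rw [hinter, Set.Icc_self]
            exact measure_mono_null Set.inter_subset_right (Real.volume_singleton)
          have := measure_union_add_inter (μ := volume) (t := S ∩ Set.Ici θ)
            (S ∩ Set.Iic θ) (hS_meas.inter measurableSet_Ici)
          rw [hunion, hz, add_zero] at this
          exact this.symm
        rw [setLIntegral_congr_fun hS_meas this,
          setLIntegral_const, ← hv_def]
      rw [ENNReal.eq_div_iff (by norm_num) (by norm_num), two_mul]
      exact hsum
    set Φ := ∫⁻ θ in Set.Icc (0 : ℝ) 1, ENNReal.ofReal (ψ θ) with hΦ_def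
    have hΦ_eq : Φ + v * v / 2 = v := by
      have c4 : Φ = (∫⁻ θ in Set.Icc (0 : ℝ) 1, ENNReal.ofReal (F θ))
          + ∫⁻ θ in S, ENNReal.ofReal (θ - F θ) := by
        have hdecomp : ∀ θ ∈ Set.Icc (0 : ℝ) 1, ENNReal.ofReal (ψ θ)
            = ENNReal.ofReal (F θ) + S.indicator (fun θ' => ENNReal.ofReal (θ' - F θ')) θ := by
          intro θ hθ
          by_cases hθS : θ ∈ S
          · rw [Set.indicator_of_mem hθS]
            simp only [hψ_def, hθS, if_true]
            rw [← ENNReal.ofReal_add (hF_nonneg θ) (by linarith [hF_le θ hθ.1])]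
            congr 1
            ring
          · rw [Set.indicator_of_notMem hθS]
            simp only [hψ_def, hθS, if_false, add_zero]
        rw [hΦ_def, setLIntegral_congr_fun measurableSet_Icc
          hdecomp,
          lintegral_add_left hF_meas.ennreal_ofReal,
          lintegral_indicator hS_meas, Measure.restrict_restrict hS_meas,
          Set.inter_eq_self_of_subset_left hS_sub]
      have c1 : ∫⁻ θ in Set.Icc (0 : ℝ) 1, ENNReal.ofReal (F θ)
          = ∫⁻ u in S, ENNReal.ofReal (1 - u) := by
        simp_rw [hSIic_ofReal]
        rw [swap_iic (Set.Icc 0 1) S hS_meas]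
        refine setLIntegral_congr_fun hS_meas (fun u hu => ?_)
        have hu' := hS_sub hu
        have hIcc : Set.Icc (0:ℝ) 1 ∩ Set.Ici u = Set.Icc u 1 := by
          ext x
          simp only [Set.mem_inter_iff, Set.mem_Icc, Set.mem_Ici]
          constructor
          · rintro ⟨⟨_, hx2⟩, hx3⟩; exact ⟨hx3, hx2⟩
          · rintro ⟨hx1, hx2⟩; exact ⟨⟨hu'.1.trans hx1, hx2⟩, hx1⟩
        rw [hIcc, Real.volume_Icc]
      have c3 : ∫⁻ θ in S, ENNReal.ofReal (F θ) = A2 := by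
        rw [hA2_def]
        exact lintegral_congr fun θ => hSIic_ofReal θ
      have c5 : (∫⁻ θ in S, ENNReal.ofReal (θ - F θ)) + A2 = ∫⁻ θ in S, ENNReal.ofReal θ := by
        rw [← c3, ← lintegral_add_right _ hF_meas.ennreal_ofReal]
        refine setLIntegral_congr_fun hS_meas (fun θ hθ => ?_)
        rw [← ENNReal.ofReal_add (by linarith [hF_le θ (hS_sub hθ).1]) (hF_nonneg θ)]
        congr 1
        ring
      have c6 : (∫⁻ u in S, ENNReal.ofReal (1 - u)) + ∫⁻ u in S, ENNReal.ofReal u = v := by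
        rw [← lintegral_add_right _ ENNReal.measurable_ofReal]
        have : ∀ u ∈ S, ENNReal.ofReal (1 - u) + ENNReal.ofReal u = 1 := by
          intro u hu
          have hu' := hS_sub hu
          rw [← ENNReal.ofReal_add (by linarith [hu'.2]) hu'.1]
          norm_num
        rw [setLIntegral_congr_fun hS_meas this,
          setLIntegral_const, one_mul]
      calc Φ + v * v / 2
          = (∫⁻ θ in Set.Icc (0 : ℝ) 1, ENNReal.ofReal (F θ))
            + ((∫⁻ θ in S, ENNReal.ofReal (θ - F θ)) + A2) := by
            rw [c4, hA2_half]; ring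
        _ = (∫⁻ u in S, ENNReal.ofReal (1 - u)) + ∫⁻ u in S, ENNReal.ofReal u := by
            rw [c1, c5]
        _ = v := c6
    have hΦ_fin : Φ ≠ ∞ := by
      intro hcon
      apply hv_fin
      rw [← hΦ_eq, hcon, top_add]
    have hvv_fin : v * v / 2 ≠ ∞ :=
      (ENNReal.div_lt_top (ENNReal.mul_ne_top hv_fin hv_fin) (by norm_num)).ne
    have hΦ_toReal : Φ.toReal = s - s * s / 2 := by
      have := congrArg ENNReal.toReal hΦ_eq
      rw [ENNReal.toReal_add hΦ_fin hvv_fin, ENNReal.toReal_div, ENNReal.toReal_mul] at this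
      simp only [← hs_def] at this
      have h2 : ((2 : ℝ≥0∞)).toReal = 2 := by norm_num
      rw [h2] at this
      linarith
    -- ∫ ψ = s - s²/2
    have hψ_int_eq : ∫ θ in (0 : ℝ)..1, ψ θ = s - s * s / 2 := by
      rw [intervalIntegral.integral_of_le zero_le_one]
      rw [MeasureTheory.integral_eq_lintegral_of_nonneg_ae]
      · rw [show volume.restrict (Set.Ioc (0:ℝ) 1) = volume.restrict (Set.Icc (0:ℝ) 1) from
          Measure.restrict_congr_set Ioc_ae_eq_Icc]
        rw [← hΦ_def, hΦ_toReal]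
      · refine (ae_restrict_iff' measurableSet_Ioc).2 (Filter.Eventually.of_forall ?_)
        intro θ hθ
        exact hψ_nonneg θ ⟨le_of_lt hθ.1, hθ.2⟩
      · exact hψ_meas.aestronglyMeasurable
    -- bound B
    have hboundB : s - s * s / 2 + a * a / 2 ≤ ∫ θ in (0 : ℝ)..1, h θ := by
      have := intervalIntegral.integral_mono_on zero_le_one (hInt_ψ.add hInt_max) hInt_h hpt
      rwa [intervalIntegral.integral_add hInt_ψ hInt_max, hψ_int_eq, hmax_val] at this
    -- bound A
    have hboundA : a ≤ ∫ θ in (0 : ℝ)..1, h θ := by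
      have : ∫ θ in (0 : ℝ)..1, a ≤ ∫ θ in (0 : ℝ)..1, h θ :=
        intervalIntegral.integral_mono_on zero_le_one intervalIntegrable_const hInt_h
          (fun θ hθ => hmono h0mem hθ hθ.1)
      rwa [intervalIntegral.integral_const, smul_eq_mul, sub_zero, one_mul] at this
    -- conclude
    show a + s ≤ (1 + r) * ∫ θ in (0 : ℝ)..1, h θ
    rcases le_total s a with hsa | has
    · nlinarith [hboundA]
    · have := scalar_ineq a s r ha0 has hs1 hr hr1
      nlinarith [hboundB]
  · -- tightness
    have hα0 : 0 ≤ r - 1 := by linarith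
    have hα1 : r - 1 ≤ 1 := by linarith
    have hset : {θ ∈ Set.Icc (0 : ℝ) 1 | θ ≤ max (r - 1) θ} = Set.Icc (0 : ℝ) 1 := by
      ext θ
      simp only [Set.mem_setOf_eq, Set.mem_Icc]
      exact ⟨fun h => h.1, fun h => ⟨h, le_max_right _ _⟩⟩
    have hvol : (volume {θ ∈ Set.Icc (0 : ℝ) 1 | θ ≤ max (r - 1) θ}).toReal = 1 := by
      rw [hset, Real.volume_Icc, sub_zero, ENNReal.toReal_ofReal zero_le_one]
    have hc : Continuous fun θ : ℝ => max (r - 1) θ := continuous_const.max continuous_id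
    have hint : ∫ θ in (0 : ℝ)..1, max (r - 1) θ = (1 + (r-1)*(r-1)) / 2 := by
      rw [← intervalIntegral.integral_add_adjacent_intervals
        (hc.intervalIntegrable 0 (r-1)) (hc.intervalIntegrable (r-1) 1)]
      have e1 : ∫ θ in (0 : ℝ)..(r-1), max (r - 1) θ = ∫ θ in (0 : ℝ)..(r-1), (r-1 : ℝ) := by
        apply intervalIntegral.integral_congr
        intro θ hθ
        rw [Set.uIcc_of_le hα0] at hθ
        exact max_eq_left hθ.2
      have e2 : ∫ θ in (r-1 : ℝ)..1, max (r - 1) θ = ∫ θ in (r-1 : ℝ)..1, θ := by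
        apply intervalIntegral.integral_congr
        intro θ hθ
        rw [Set.uIcc_of_le hα1] at hθ
        exact max_eq_right hθ.1
      rw [e1, e2, intervalIntegral.integral_const, integral_id, smul_eq_mul]
      ring
    show max (r - 1) 0 + _ = _
    rw [hvol, hint, max_eq_left hα0]
    nlinarith [hr]
end

section
/- For all real numbers α, β with 0 ≤ α ≤ β ≤ 1, one has α + β ≤ (1 + √2)·(α²/2 + β − β²/2). -/
/-- For all real `α, β` with `0 ≤ α ≤ β ≤ 1`,
`α + β ≤ (1 + √2)·(α²/2 + β − β²/2)`. -/
theorem alpha_beta_sqrt_two_inequality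
    (α β : ℝ) (h0 : 0 ≤ α) (hαβ : α ≤ β) (hβ : β ≤ 1) :
    α + β ≤ (1 + Real.sqrt 2) * (α ^ 2 / 2 + β - β ^ 2 / 2) := by
  set s := Real.sqrt 2 with hsdef
  have hs : s ^ 2 = 2 := Real.sq_sqrt (by norm_num)
  have hs1 : (1:ℝ) ≤ s := by nlinarith [Real.sqrt_nonneg 2]
  have key : 2 * ((1 + s) * (α ^ 2 / 2 + β - β ^ 2 / 2) - (α + β)) =
      (1 + s) * (α - (s - 1) * β) ^ 2 + 2 * (1 - β) * (s * β - α) := by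
    linear_combination (2 * α * β - (s - 1) * β ^ 2) * hs
  have h1 : 0 ≤ (1 + s) * (α - (s - 1) * β) ^ 2 :=
    mul_nonneg (by linarith) (sq_nonneg _)
  have h2 : 0 ≤ 2 * (1 - β) * (s * β - α) := by
    apply mul_nonneg (by linarith)
    nlinarith
  linarith
end

section
/- Let M be a finite set of machines with speeds s : M → ℝ>0, let γ > 1, K a positive integer, and for k ∈ {1,…,K} let M_k = {i ∈ M : γ^{k−1} ≤ s_i < γ^k}; assume every machine lies in some group (1 ≤ s_i < γ^K for all i). Let x : M → ℝ≥0 with Σ_{i ∈ M} x_i = 1 be a fractional assignment of a job of size p > 0, let ℓ be the largest index in {1,…,K} such that Σ_{k=ℓ}^K Σ_{i ∈ M_k} x_i ≥ 1/2, and let k* be any index with ℓ ≤ k* ≤ K. Then for every machine i ∈ M_{k*}: p/s_i ≤ 2γ·Σ_{i' ∈ M} p·x_{i'}/s_{i'}. -/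
open Finset

private lemma group_sum_eq
    (M : Type) [Fintype M]
    (s : M → ℝ) (γ : ℝ) (hγ : 1 < γ)
    (K : ℕ) (hcover : ∀ i, 1 ≤ s i ∧ s i < γ ^ K)
    (x : M → ℝ) (a : ℕ) (ha : 1 ≤ a) :
    ∑ k ∈ Icc a K, ∑ i ∈ univ.filter (fun i => γ ^ (k - 1) ≤ s i ∧ s i < γ ^ k), x i
      = ∑ i ∈ univ.filter (fun i => γ ^ (a - 1) ≤ s i), x i := by
  have hγ1 : (1:ℝ) ≤ γ := le_of_lt hγ
  simp only [Finset.sum_filter]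
  rw [Finset.sum_comm]
  refine Finset.sum_congr rfl (fun j _ => ?_)
  have hex : ∃ k, s j < γ ^ k := ⟨K, (hcover j).2⟩
  set k0 := Nat.find hex with hk0
  have hP0 : s j < γ ^ k0 := Nat.find_spec hex
  have hk0pos : 1 ≤ k0 := by
    rcases Nat.eq_zero_or_pos k0 with h | h
    · exfalso; rw [h] at hP0; simp at hP0; linarith [(hcover j).1]
    · exact h
  have hk0K : k0 ≤ K := Nat.find_le (hcover j).2
  have hlow : γ ^ (k0 - 1) ≤ s j := by
    by_contra h
    push_neg at h
    have := Nat.find_le (h := hex) h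
    omega
  have hiff : ∀ k, 1 ≤ k → ((γ ^ (k - 1) ≤ s j ∧ s j < γ ^ k) ↔ k = k0) := by
    intro k hk1
    constructor
    · rintro ⟨h1, h2⟩
      have hle : k0 ≤ k := Nat.find_le h2
      have hge : k ≤ k0 := by
        by_contra h
        push_neg at h
        have hkk : k0 ≤ k - 1 := by omega
        have : γ ^ k0 ≤ γ ^ (k - 1) := pow_le_pow_right₀ hγ1 hkk
        linarith
      omega
    · rintro rfl; exact ⟨hlow, hP0⟩
  calc ∑ k ∈ Icc a K, (if γ ^ (k - 1) ≤ s j ∧ s j < γ ^ k then x j else 0)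
      = ∑ k ∈ Icc a K, (if k = k0 then x j else 0) := by
        refine Finset.sum_congr rfl (fun k hk => ?_)
        rw [Finset.mem_Icc] at hk
        simp only [hiff k (le_trans ha hk.1)]
    _ = if k0 ∈ Icc a K then x j else 0 := Finset.sum_ite_eq' _ _ _
    _ = if γ ^ (a - 1) ≤ s j then x j else 0 := by
        congr 1
        simp only [eq_iff_iff, Finset.mem_Icc]
        constructor
        · rintro ⟨h1, _⟩
          calc γ ^ (a-1) ≤ γ ^ (k0-1) := pow_le_pow_right₀ hγ1 (by omega)
            _ ≤ s j := hlow
        · intro h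
          refine ⟨?_, hk0K⟩
          by_contra hc
          push_neg at hc
          have hk0le : k0 ≤ a - 1 := by omega
          have : γ ^ k0 ≤ γ ^ (a-1) := pow_le_pow_right₀ hγ1 hk0le
          linarith

/-- Machines are partitioned into speed groups
`M_k = {i : γ^(k−1) ≤ s_i < γ^k}` for `k ∈ {1,…,K}`, covering all machines. For a job of
size `p` with fractional assignment `x`, if `ℓ` is the largest index in `{1,…,K}` with at
least half of the fractional assignment in groups `ℓ` through `K`, and `ℓ ≤ k* ≤ K`, then
every machine `i ∈ M_{k*}` satisfies `p/s_i ≤ 2γ·Σ_{i'} p·x_{i'}/s_{i'}`. -/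
theorem related_group_speed_bound
    (M : Type) [Fintype M]
    (s : M → ℝ) (hs : ∀ i, 0 < s i)
    (γ : ℝ) (hγ : 1 < γ)
    (K : ℕ) (hK : 0 < K)
    (hcover : ∀ i, 1 ≤ s i ∧ s i < γ ^ K)
    (x : M → ℝ) (hx_nonneg : ∀ i, 0 ≤ x i) (hx_sum : ∑ i, x i = 1)
    (p : ℝ) (hp : 0 < p)
    (ℓ : ℕ) (hℓ : ℓ ∈ Icc 1 K)
    (hℓ_ge : (1 : ℝ) / 2 ≤ ∑ k ∈ Icc ℓ K,
      ∑ i ∈ univ.filter (fun i => γ ^ (k - 1) ≤ s i ∧ s i < γ ^ k), x i)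
    (hℓ_max : ∀ ℓ' ∈ Icc 1 K,
      ((1 : ℝ) / 2 ≤ ∑ k ∈ Icc ℓ' K,
        ∑ i ∈ univ.filter (fun i => γ ^ (k - 1) ≤ s i ∧ s i < γ ^ k), x i) → ℓ' ≤ ℓ)
    (kstar : ℕ) (hk1 : ℓ ≤ kstar) (hk2 : kstar ≤ K)
    (i : M) (hi : γ ^ (kstar - 1) ≤ s i ∧ s i < γ ^ kstar) :
    p / s i ≤ 2 * γ * ∑ i', p * x i' / s i' := by
  have hγ0 : (0:ℝ) < γ := lt_trans one_pos hγ
  have hγ1 : (1:ℝ) ≤ γ := le_of_lt hγ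
  rw [Finset.mem_Icc] at hℓ
  obtain ⟨hℓ1, hℓK⟩ := hℓ
  have hfast : ∑ j ∈ univ.filter (fun j => γ ^ ℓ ≤ s j), x j ≤ 1/2 := by
    rcases eq_or_lt_of_le hℓK with h | h
    · have hemp : univ.filter (fun j => γ ^ ℓ ≤ s j) = ∅ := by
        refine Finset.filter_eq_empty_iff.mpr (fun j _ => ?_)
        push_neg
        rw [h]; exact (hcover j).2
      rw [hemp]; simp
    · have key := group_sum_eq M s γ hγ K hcover x (ℓ+1) (by omega)
      simp only [Nat.add_sub_cancel] at key
      rw [← key]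
      by_contra hc
      push_neg at hc
      have := hℓ_max (ℓ+1) (Finset.mem_Icc.mpr ⟨by omega, by omega⟩) (le_of_lt hc)
      omega
  have hslow : (1:ℝ)/2 ≤ ∑ j ∈ univ.filter (fun j => ¬ γ ^ ℓ ≤ s j), x j := by
    have hsp := Finset.sum_filter_add_sum_filter_not univ (fun j => γ ^ ℓ ≤ s j) x
    rw [hx_sum] at hsp
    linarith
  have hpow_pos : (0:ℝ) < γ ^ ℓ := pow_pos hγ0 ℓ
  have hbound : p / (2 * γ ^ ℓ) ≤ ∑ i', p * x i' / s i' := by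
    have h1 : ∑ j ∈ univ.filter (fun j => ¬ γ ^ ℓ ≤ s j), p * x j / γ ^ ℓ
        ≤ ∑ j ∈ univ.filter (fun j => ¬ γ ^ ℓ ≤ s j), p * x j / s j := by
      refine Finset.sum_le_sum (fun j hj => ?_)
      rw [Finset.mem_filter] at hj
      push_neg at hj
      have hxle : 0 ≤ p * x j := mul_nonneg (le_of_lt hp) (hx_nonneg j)
      exact div_le_div_of_nonneg_left hxle (hs j) (le_of_lt hj.2)
    have h2 : ∑ j ∈ univ.filter (fun j => ¬ γ ^ ℓ ≤ s j), p * x j / s j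
        ≤ ∑ i', p * x i' / s i' := by
      refine Finset.sum_le_sum_of_subset_of_nonneg (Finset.filter_subset _ _)
        (fun j _ _ => ?_)
      exact div_nonneg (mul_nonneg (le_of_lt hp) (hx_nonneg j)) (le_of_lt (hs j))
    have h3 : p / (2 * γ ^ ℓ)
        ≤ ∑ j ∈ univ.filter (fun j => ¬ γ ^ ℓ ≤ s j), p * x j / γ ^ ℓ := by
      have : ∑ j ∈ univ.filter (fun j => ¬ γ ^ ℓ ≤ s j), p * x j / γ ^ ℓ
          = (p / γ ^ ℓ) * ∑ j ∈ univ.filter (fun j => ¬ γ ^ ℓ ≤ s j), x j := by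
        rw [Finset.mul_sum]
        refine Finset.sum_congr rfl (fun j _ => ?_)
        ring
      rw [this]
      have hpγ : 0 < p / γ ^ ℓ := div_pos hp hpow_pos
      calc p / (2 * γ ^ ℓ) = (p / γ ^ ℓ) * (1/2) := by ring
        _ ≤ (p / γ ^ ℓ) * ∑ j ∈ univ.filter (fun j => ¬ γ ^ ℓ ≤ s j), x j :=
            mul_le_mul_of_nonneg_left hslow (le_of_lt hpγ)
    linarith
  have hsi : γ ^ (ℓ - 1) ≤ s i :=
    le_trans (pow_le_pow_right₀ hγ1 (by omega)) hi.1
  have hsil : 0 < γ ^ (ℓ - 1) := pow_pos hγ0 _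
  have hfin : p / s i ≤ p / γ ^ (ℓ - 1) :=
    div_le_div_of_nonneg_left (le_of_lt hp) hsil hsi
  have heq : p / γ ^ (ℓ - 1) = 2 * γ * (p / (2 * γ ^ ℓ)) := by
    have hℓeq : γ ^ ℓ = γ ^ (ℓ - 1) * γ := by
      rw [← pow_succ]
      congr 1
      omega
    rw [hℓeq]
    field_simp
  calc p / s i ≤ p / γ ^ (ℓ - 1) := hfin
    _ = 2 * γ * (p / (2 * γ ^ ℓ)) := heq
    _ ≤ 2 * γ * ∑ i', p * x i' / s i' := by
        apply mul_le_mul_of_nonneg_left hbound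
        positivity
end

section
/- Let M be a finite set of machines with speeds s : M → ℝ>0, let γ > 1, K a positive integer, and for k ∈ {1,…,K} let M_k = {i ∈ M : γ^{k−1} ≤ s_i < γ^k}; assume every machine lies in some group. Let J be a finite set of jobs with sizes p_j > 0, let x : M × J → ℝ≥0 with Σ_{i} x_{i,j} = 1 for every j, and let D ≥ 0 satisfy Σ_j p_j·x_{i,j} ≤ s_i·D for every machine i. For each job j let ℓ_j be the largest ℓ ∈ {1,…,K} with Σ_{k=ℓ}^K Σ_{i ∈ M_k} x_{i,j} ≥ 1/2, and let k_j ∈ {ℓ_j,…,K} be an index maximizing s(M_{k_j}) = Σ_{i ∈ M_{k_j}} s_i over k ∈ {ℓ_j,…,K}. Then Σ_{j ∈ J} p_j / s(M_{k_j}) ≤ 2·K·D. -/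
open Finset

/-- Machines are partitioned into speed groups
`M_k = {i : γ^(k−1) ≤ s_i < γ^k}` for `k ∈ {1,…,K}`, covering all machines. Given a
fractional assignment `x` with per-machine load at most `s_i·D`, and for each job `j` the
largest index `ℓ j` with at least half of `j`'s fractional assignment in groups `ℓ j`
through `K`, and `kj j ∈ [ℓ j, K]` maximizing the total group speed, one has
`Σ_j p_j / s(M_{kj j}) ≤ 2·K·D`. -/
theorem related_group_total_speed_bound
    (M J : Type) [Fintype M] [Fintype J]
    (s : M → ℝ) (hs : ∀ i, 0 < s i)
    (γ : ℝ) (hγ : 1 < γ)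
    (K : ℕ) (hK : 0 < K)
    (hcover : ∀ i, 1 ≤ s i ∧ s i < γ ^ K)
    (p : J → ℝ) (hp : ∀ j, 0 < p j)
    (x : M → J → ℝ) (hx_nonneg : ∀ i j, 0 ≤ x i j) (hx_sum : ∀ j, ∑ i, x i j = 1)
    (D : ℝ) (hD : 0 ≤ D)
    (hload : ∀ i, ∑ j, p j * x i j ≤ s i * D)
    (ℓ : J → ℕ) (hℓ : ∀ j, ℓ j ∈ Icc 1 K)
    (hℓ_ge : ∀ j, (1 : ℝ) / 2 ≤ ∑ k ∈ Icc (ℓ j) K,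
      ∑ i ∈ univ.filter (fun i => γ ^ (k - 1) ≤ s i ∧ s i < γ ^ k), x i j)
    (hℓ_max : ∀ j, ∀ ℓ' ∈ Icc 1 K,
      ((1 : ℝ) / 2 ≤ ∑ k ∈ Icc ℓ' K,
        ∑ i ∈ univ.filter (fun i => γ ^ (k - 1) ≤ s i ∧ s i < γ ^ k), x i j) → ℓ' ≤ ℓ j)
    (kj : J → ℕ) (hkj : ∀ j, kj j ∈ Icc (ℓ j) K)
    (hkj_max : ∀ j, ∀ k ∈ Icc (ℓ j) K,
      ∑ i ∈ univ.filter (fun i => γ ^ (k - 1) ≤ s i ∧ s i < γ ^ k), s i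
        ≤ ∑ i ∈ univ.filter (fun i => γ ^ (kj j - 1) ≤ s i ∧ s i < γ ^ (kj j)), s i) :
    ∑ j, p j / (∑ i ∈ univ.filter (fun i => γ ^ (kj j - 1) ≤ s i ∧ s i < γ ^ (kj j)), s i)
      ≤ 2 * K * D := by

  classical
  have hSnn : ∀ k : ℕ,
      (0:ℝ) ≤ ∑ i ∈ univ.filter (fun i => γ ^ (k - 1) ≤ s i ∧ s i < γ ^ k), s i :=
    fun k => Finset.sum_nonneg fun i _ => (hs i).le
  have hSpos : ∀ j, (0:ℝ) <
      ∑ i ∈ univ.filter (fun i => γ ^ (kj j - 1) ≤ s i ∧ s i < γ ^ (kj j)), s i := by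
    intro j
    rcases (hSnn (kj j)).lt_or_eq with h | h
    · exact h
    exfalso
    have hz : ∑ k ∈ Icc (ℓ j) K,
        ∑ i ∈ univ.filter (fun i => γ ^ (k - 1) ≤ s i ∧ s i < γ ^ k), x i j = 0 := by
      refine Finset.sum_eq_zero fun k hk => ?_
      have h1 := hkj_max j k hk
      have hemp : univ.filter (fun i => γ ^ (k - 1) ≤ s i ∧ s i < γ ^ k) = (∅ : Finset M) := by
        rw [Finset.eq_empty_iff_forall_notMem]
        intro i hi
        have h2 : s i ≤ ∑ i ∈ univ.filter (fun i => γ ^ (k - 1) ≤ s i ∧ s i < γ ^ k), s i :=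
          Finset.single_le_sum (fun i' _ => (hs i').le) hi
        linarith [hs i]
      simp [hemp]
    linarith [hℓ_ge j]
  have hA : ∀ j, p j / (∑ i ∈ univ.filter
        (fun i => γ ^ (kj j - 1) ≤ s i ∧ s i < γ ^ (kj j)), s i)
      ≤ 2 * ∑ k ∈ Icc (ℓ j) K, ∑ i ∈ univ.filter
        (fun i => γ ^ (k - 1) ≤ s i ∧ s i < γ ^ k),
        p j * x i j / (∑ i' ∈ univ.filter
          (fun i' => γ ^ (k - 1) ≤ s i' ∧ s i' < γ ^ k), s i') := by
    intro j
    have hpos := hSpos j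
    have h1 : p j / (∑ i ∈ univ.filter
          (fun i => γ ^ (kj j - 1) ≤ s i ∧ s i < γ ^ (kj j)), s i)
        ≤ 2 * ∑ k ∈ Icc (ℓ j) K, ∑ i ∈ univ.filter
          (fun i => γ ^ (k - 1) ≤ s i ∧ s i < γ ^ k),
          p j * x i j / (∑ i' ∈ univ.filter
            (fun i' => γ ^ (kj j - 1) ≤ s i' ∧ s i' < γ ^ (kj j)), s i') := by
      have heq : 2 * ∑ k ∈ Icc (ℓ j) K, ∑ i ∈ univ.filter
            (fun i => γ ^ (k - 1) ≤ s i ∧ s i < γ ^ k),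
            p j * x i j / (∑ i' ∈ univ.filter
              (fun i' => γ ^ (kj j - 1) ≤ s i' ∧ s i' < γ ^ (kj j)), s i')
          = (p j * (2 * ∑ k ∈ Icc (ℓ j) K, ∑ i ∈ univ.filter
              (fun i => γ ^ (k - 1) ≤ s i ∧ s i < γ ^ k), x i j))
            / (∑ i' ∈ univ.filter
              (fun i' => γ ^ (kj j - 1) ≤ s i' ∧ s i' < γ ^ (kj j)), s i') := by
        simp only [Finset.mul_sum, Finset.sum_div]
        refine Finset.sum_congr rfl fun k _ => Finset.sum_congr rfl fun i _ => ?_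
        ring
      rw [heq]
      have hge := hℓ_ge j
      apply div_le_div_of_nonneg_right ?_ hpos.le
      nlinarith [hp j]
    refine h1.trans ?_
    refine mul_le_mul_of_nonneg_left ?_ (by norm_num)
    refine Finset.sum_le_sum fun k hk => Finset.sum_le_sum fun i hi => ?_
    have hSk : (0:ℝ) < ∑ i' ∈ univ.filter
        (fun i' => γ ^ (k - 1) ≤ s i' ∧ s i' < γ ^ k), s i' :=
      Finset.sum_pos (fun i' _ => hs i') ⟨i, hi⟩
    exact div_le_div_of_nonneg_left (mul_nonneg (hp j).le (hx_nonneg i j)) hSk (hkj_max j k hk)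
  have hB : ∀ k : ℕ, ∑ i ∈ univ.filter (fun i => γ ^ (k - 1) ≤ s i ∧ s i < γ ^ k),
      (∑ j, p j * x i j) / (∑ i' ∈ univ.filter
        (fun i' => γ ^ (k - 1) ≤ s i' ∧ s i' < γ ^ k), s i') ≤ D := by
    intro k
    rcases Finset.eq_empty_or_nonempty
        (univ.filter (fun i => γ ^ (k - 1) ≤ s i ∧ s i < γ ^ k)) with he | hne
    · simp [he, hD]
    have hSk : (0:ℝ) < ∑ i' ∈ univ.filter
        (fun i' => γ ^ (k - 1) ≤ s i' ∧ s i' < γ ^ k), s i' :=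
      Finset.sum_pos (fun i' _ => hs i') hne
    rw [← Finset.sum_div, div_le_iff₀ hSk]
    calc ∑ i ∈ univ.filter (fun i => γ ^ (k - 1) ≤ s i ∧ s i < γ ^ k), ∑ j, p j * x i j
        ≤ ∑ i ∈ univ.filter (fun i => γ ^ (k - 1) ≤ s i ∧ s i < γ ^ k), s i * D :=
          Finset.sum_le_sum fun i _ => hload i
      _ = D * ∑ i' ∈ univ.filter (fun i' => γ ^ (k - 1) ≤ s i' ∧ s i' < γ ^ k), s i' := by
          rw [← Finset.sum_mul, mul_comm]
  calc ∑ j, p j / (∑ i ∈ univ.filter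
        (fun i => γ ^ (kj j - 1) ≤ s i ∧ s i < γ ^ (kj j)), s i)
      ≤ ∑ j, 2 * ∑ k ∈ Icc (ℓ j) K, ∑ i ∈ univ.filter
          (fun i => γ ^ (k - 1) ≤ s i ∧ s i < γ ^ k),
          p j * x i j / (∑ i' ∈ univ.filter
            (fun i' => γ ^ (k - 1) ≤ s i' ∧ s i' < γ ^ k), s i') :=
        Finset.sum_le_sum fun j _ => hA j
    _ ≤ ∑ j, 2 * ∑ k ∈ Icc 1 K, ∑ i ∈ univ.filter
          (fun i => γ ^ (k - 1) ≤ s i ∧ s i < γ ^ k),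
          p j * x i j / (∑ i' ∈ univ.filter
            (fun i' => γ ^ (k - 1) ≤ s i' ∧ s i' < γ ^ k), s i') := by
        refine Finset.sum_le_sum fun j _ => mul_le_mul_of_nonneg_left ?_ (by norm_num)
        refine Finset.sum_le_sum_of_subset_of_nonneg
          (Finset.Icc_subset_Icc (Finset.mem_Icc.mp (hℓ j)).1 le_rfl) fun k _ _ =>
          Finset.sum_nonneg fun i _ =>
            div_nonneg (mul_nonneg (hp j).le (hx_nonneg i j)) (hSnn k)
    _ = 2 * ∑ k ∈ Icc 1 K, ∑ i ∈ univ.filter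
          (fun i => γ ^ (k - 1) ≤ s i ∧ s i < γ ^ k),
          (∑ j, p j * x i j) / (∑ i' ∈ univ.filter
            (fun i' => γ ^ (k - 1) ≤ s i' ∧ s i' < γ ^ k), s i') := by
        rw [← Finset.mul_sum]
        congr 1
        rw [Finset.sum_comm]
        refine Finset.sum_congr rfl fun k _ => ?_
        rw [Finset.sum_comm]
        exact Finset.sum_congr rfl fun i _ => by rw [← Finset.sum_div]
    _ ≤ 2 * ∑ _k ∈ Icc 1 K, D :=
        mul_le_mul_of_nonneg_left (Finset.sum_le_sum fun k _ => hB k) (by norm_num)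
    _ = 2 * K * D := by
        rw [Finset.sum_const, Nat.card_Icc]
        simp [mul_assoc]
end
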